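/- arXiv:2208.08737 — 7 statements merged into one kernel-verified Lean document; each statement's English description precedes it below -/
import Mathlib

section
/- The set Λ = {(z₁,z₂,z₃) ∈ O³ : z₁ ≡ z₂ ≡ z₃ (mod α) and z₁ + z₂ + z₃ ≡ 0 (mod ᾱ)} is an O-submodule of O³, where O = ℤ[α] with α = (1+i√7)/2; moreover Λ equals the O-module generated by the three vectors φ₁ = (0, α, -α), φ₂ = (0, 0, 2), φ₃ = (1, 1, ᾱ). -/
noncomputable def alpha : ℂ := (1 + Complex.I * Real.sqrt 7) / 2
noncomputable def alphaBar : ℂ := (1 - Complex.I * Real.sqrt 7) / 2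

/-- `O = ℤ[α]` as a subring of `ℂ`. -/
noncomputable def O : Subring ℂ := Subring.closure {alpha}

/-- The lattice `Λ`. -/
noncomputable def Lam : Set (Fin 3 → ℂ) :=
  {z | (∀ i, z i ∈ O) ∧
    (∃ o ∈ O, z 0 - z 1 = alpha * o) ∧ (∃ o ∈ O, z 1 - z 2 = alpha * o) ∧
    (∃ o ∈ O, z 0 + z 1 + z 2 = alphaBar * o)}

noncomputable def phi1 : Fin 3 → ℂ := ![0, alpha, -alpha]
noncomputable def phi2 : Fin 3 → ℂ := ![0, 0, 2]
noncomputable def phi3 : Fin 3 → ℂ := ![1, 1, alphaBar]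

/-! Since `α + ᾱ = 1` and `αᾱ = 2`, an element of `O` divisible by both `α` and `ᾱ` is divisible
by `2`, as `x = xα + xᾱ`. For `z ∈ Λ` take `c = z₀` and `a = -o` where `z₀ - z₁ = αo`; then
`z₂ + aα - cᾱ` is divisible by `α` (as `z₀ ≡ z₂`) and by `ᾱ` (as `z₀ + z₁ + z₂ ≡ 0`), hence equals
`2b` with `b ∈ O`, and `z = aφ₁ + bφ₂ + cφ₃`. -/

section Multiples

variable {R : Type*} [CommRing R] {S : Subring R} {d x y : R}

lemma exists_mem_eq_mul_add (hx : ∃ o ∈ S, x = d * o) (hy : ∃ o ∈ S, y = d * o) :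
    ∃ o ∈ S, x + y = d * o := by
  obtain ⟨o, ho, rfl⟩ := hx
  obtain ⟨o', ho', rfl⟩ := hy
  exact ⟨o + o', S.add_mem ho ho', by ring⟩

lemma exists_mem_mul_eq_mul {c : R} (hc : c ∈ S) (hx : ∃ o ∈ S, x = d * o) :
    ∃ o ∈ S, c * x = d * o := by
  obtain ⟨o, ho, rfl⟩ := hx
  exact ⟨c * o, S.mul_mem hc ho, by ring⟩

lemma exists_mem_eq_mul_mul_of_add_eq_one {p q : R} (hpq : p + q = 1)
    (hp : ∃ u ∈ S, x = p * u) (hq : ∃ v ∈ S, x = q * v) : ∃ w ∈ S, x = p * q * w := by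
  obtain ⟨u, hu, hxu⟩ := hp
  obtain ⟨v, hv, hxv⟩ := hq
  refine ⟨u + v, S.add_mem hu hv, ?_⟩
  linear_combination q * hxu + p * hxv - x * hpq

end Multiples

lemma alpha_add_alphaBar : alpha + alphaBar = 1 := by
  unfold alpha alphaBar; ring

lemma alpha_mul_alphaBar : alpha * alphaBar = 2 := by
  have h7 : ((Real.sqrt 7 : ℝ) : ℂ) ^ 2 = 7 := by
    rw [← Complex.ofReal_pow, Real.sq_sqrt (by norm_num)]; norm_num
  unfold alpha alphaBar
  linear_combination (-(Real.sqrt 7 : ℂ) ^ 2 / 4) * Complex.I_sq + h7 / 4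

lemma alpha_mem_O : alpha ∈ O := Subring.subset_closure rfl

lemma alphaBar_mem_O : alphaBar ∈ O := by
  rw [eq_sub_of_add_eq' alpha_add_alphaBar]
  exact O.sub_mem O.one_mem alpha_mem_O

lemma zero_mem_Lam : (0 : Fin 3 → ℂ) ∈ Lam :=
  ⟨fun _ => O.zero_mem, ⟨0, O.zero_mem, by simp⟩, ⟨0, O.zero_mem, by simp⟩,
    ⟨0, O.zero_mem, by simp⟩⟩

lemma add_mem_Lam {x y : Fin 3 → ℂ} (hx : x ∈ Lam) (hy : y ∈ Lam) : x + y ∈ Lam := by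
  obtain ⟨hxO, hx₁, hx₂, hx₃⟩ := hx
  obtain ⟨hyO, hy₁, hy₂, hy₃⟩ := hy
  refine ⟨fun i => O.add_mem (hxO i) (hyO i), ?_, ?_, ?_⟩ <;> simp only [Pi.add_apply]
  · simpa only [add_sub_add_comm] using exists_mem_eq_mul_add hx₁ hy₁
  · simpa only [add_sub_add_comm] using exists_mem_eq_mul_add hx₂ hy₂
  · simpa only [add_add_add_comm] using exists_mem_eq_mul_add hx₃ hy₃

lemma smul_mem_Lam {c : ℂ} (hc : c ∈ O) {x : Fin 3 → ℂ} (hx : x ∈ Lam) :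
    (fun i => c * x i) ∈ Lam := by
  obtain ⟨hxO, hx₁, hx₂, hx₃⟩ := hx
  refine ⟨fun i => O.mul_mem hc (hxO i), ?_, ?_, ?_⟩
  · simpa only [mul_sub] using exists_mem_mul_eq_mul hc hx₁
  · simpa only [mul_sub] using exists_mem_mul_eq_mul hc hx₂
  · simpa only [mul_add] using exists_mem_mul_eq_mul hc hx₃

lemma phi1_mem_Lam : phi1 ∈ Lam := by
  refine ⟨?_, ⟨-1, O.neg_mem O.one_mem, ?_⟩, ⟨2, ofNat_mem O 2, ?_⟩, ⟨0, O.zero_mem, ?_⟩⟩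
  · intro i; fin_cases i <;> simp [phi1, alpha_mem_O]
  all_goals
    simp only [phi1, Matrix.cons_val_zero, Matrix.cons_val_one, Matrix.cons_val]
    ring

lemma phi2_mem_Lam : phi2 ∈ Lam := by
  refine ⟨?_, ⟨0, O.zero_mem, ?_⟩, ⟨-alphaBar, O.neg_mem alphaBar_mem_O, ?_⟩,
    ⟨alpha, alpha_mem_O, ?_⟩⟩
  · intro i; fin_cases i <;> simp [phi2, ofNat_mem]
  all_goals simp only [phi2, Matrix.cons_val_zero, Matrix.cons_val_one, Matrix.cons_val]
  · ring
  · linear_combination alpha_mul_alphaBar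
  · linear_combination -alpha_mul_alphaBar

lemma phi3_mem_Lam : phi3 ∈ Lam := by
  refine ⟨?_, ⟨0, O.zero_mem, ?_⟩, ⟨1, O.one_mem, ?_⟩,
    ⟨alpha + 1, O.add_mem alpha_mem_O O.one_mem, ?_⟩⟩
  · intro i; fin_cases i <;> simp [phi3, alphaBar_mem_O]
  all_goals simp only [phi3, Matrix.cons_val_zero, Matrix.cons_val_one, Matrix.cons_val]
  · ring
  · linear_combination -alpha_add_alphaBar
  · linear_combination -alpha_mul_alphaBar

lemma combination_mem_Lam {a b c : ℂ} (ha : a ∈ O) (hb : b ∈ O) (hc : c ∈ O) :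
    (fun i => a * phi1 i + b * phi2 i + c * phi3 i) ∈ Lam :=
  add_mem_Lam (add_mem_Lam (smul_mem_Lam ha phi1_mem_Lam) (smul_mem_Lam hb phi2_mem_Lam))
    (smul_mem_Lam hc phi3_mem_Lam)

lemma exists_combination_of_mem_Lam {z : Fin 3 → ℂ} (hz : z ∈ Lam) :
    ∃ a ∈ O, ∃ b ∈ O, ∃ c ∈ O, z = fun i => a * phi1 i + b * phi2 i + c * phi3 i := by
  obtain ⟨hzO, ⟨o₁, ho₁, h₀₁⟩, ⟨o₂, ho₂, h₁₂⟩, ⟨o₃, ho₃, hsum⟩⟩ := hz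
  have hα : ∃ u ∈ O, z 2 - alpha * o₁ - z 0 * alphaBar = alpha * u :=
    ⟨z 0 - 2 * o₁ - o₂, O.sub_mem (O.sub_mem (hzO 0) (O.mul_mem (ofNat_mem O 2) ho₁)) ho₂, by
      linear_combination -h₀₁ - h₁₂ - z 0 * alpha_add_alphaBar⟩
  have hαBar : ∃ v ∈ O, z 2 - alpha * o₁ - z 0 * alphaBar = alphaBar * v :=
    ⟨o₃ - z 0 * alpha - z 0, O.sub_mem (O.sub_mem ho₃ (O.mul_mem (hzO 0) alpha_mem_O)) (hzO 0), by
      linear_combination hsum + h₀₁ + z 0 * alpha_mul_alphaBar⟩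
  obtain ⟨b, hb, h2b⟩ := exists_mem_eq_mul_mul_of_add_eq_one alpha_add_alphaBar hα hαBar
  refine ⟨-o₁, O.neg_mem ho₁, b, hb, z 0, hzO 0, ?_⟩
  funext i
  fin_cases i <;>
    simp only [phi1, phi2, phi3, Fin.zero_eta, Fin.mk_one, Fin.reduceFinMk, Matrix.cons_val_zero,
      Matrix.cons_val_one, Matrix.cons_val]
  · ring
  · linear_combination -h₀₁
  · linear_combination h2b + b * alpha_mul_alphaBar

/-- `Λ` is an `O`-submodule of `O³`, and it is generated over `O` by `φ₁, φ₂, φ₃`. -/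
theorem stmt_1 :
    ((0 : Fin 3 → ℂ) ∈ Lam) ∧
    (∀ x y, x ∈ Lam → y ∈ Lam → x + y ∈ Lam) ∧
    (∀ c : ℂ, c ∈ O → ∀ x, x ∈ Lam → (fun i => c * x i) ∈ Lam) ∧
    Lam = {z | ∃ a ∈ O, ∃ b ∈ O, ∃ c ∈ O,
      z = fun i => a * phi1 i + b * phi2 i + c * phi3 i} := by
  refine ⟨zero_mem_Lam, fun _ _ => add_mem_Lam, fun _ hc _ => smul_mem_Lam hc, ?_⟩
  ext z
  refine ⟨exists_combination_of_mem_Lam, ?_⟩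
  rintro ⟨a, ha, b, hb, c, hc, rfl⟩
  exact combination_mem_Lam ha hb hc
end

section
/- Each of the three complex 3×3 matrices r₁ = [[1,0,0],[0,0,1],[0,1,0]], r₂ = [[1,0,0],[0,1,0],[0,0,-1]], r₃ = (1/2)·[[1,-1,-α],[-1,1,-α],[-ᾱ,-ᾱ,0]] (with α = (1+i√7)/2, ᾱ = (1-i√7)/2) is unitary of order 2, and its fixed subspace in ℂ³ has dimension 2 (i.e., each rᵢ is a complex reflection of order 2). -/
open Matrix

noncomputable def r1 : Matrix (Fin 3) (Fin 3) ℂ := !![1,0,0; 0,0,1; 0,1,0]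
noncomputable def r2 : Matrix (Fin 3) (Fin 3) ℂ := !![1,0,0; 0,1,0; 0,0,-1]
noncomputable def r3 : Matrix (Fin 3) (Fin 3) ℂ :=
  (1/2 : ℂ) • !![1,-1,-alpha; -1,1,-alpha; -alphaBar,-alphaBar,0]

/-!
Each `rᵢ` is the Householder reflection `1 - 2 u u* / (u* u)` along a nonzero vector `u`, namely
`(0, 1, -1)`, `(0, 0, 1)` and `(1, 1, ᾱ)` (the last because `α ᾱ = 2`). A Householder reflection is a
Hermitian involution, hence unitary, and `r - 1` is a nonzero rank-one matrix `w u*`, so its kernel,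
the fixed space of `r`, is a hyperplane.
-/

open scoped ComplexOrder

namespace Matrix

theorem finrank_ker_toLin'_vecMulVec {K n : Type*} [Field K] [Fintype n] [DecidableEq n]
    {w v : n → K} (hw : w ≠ 0) (hv : v ≠ 0) :
    Module.finrank K (LinearMap.ker (toLin' (vecMulVec w v))) = Fintype.card n - 1 := by
  have hle : (vecMulVec w v).rank ≤ 1 := rank_vecMulVec_le w v
  have hne : (vecMulVec w v).rank ≠ 0 := by
    rw [rank, Ne, Submodule.finrank_eq_zero, LinearMap.range_eq_bot]
    intro h
    exact vecMulVec_ne_zero hw hv (toLin'.injective (by rwa [toLin'_apply', map_zero]))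
  have := LinearMap.finrank_range_add_finrank_ker (vecMulVec w v).mulVecLin
  rw [Module.finrank_fintype_fun_eq_card] at this
  rw [toLin'_apply']
  change (vecMulVec w v).rank + _ = _ at this
  omega

section Householder

variable {𝕜 n : Type*} [RCLike 𝕜] [Fintype n] [DecidableEq n] {u : n → 𝕜}

noncomputable def householder (u : n → 𝕜) : Matrix n n 𝕜 :=
  1 - (2 / (star u ⬝ᵥ u)) • vecMulVec u (star u)

theorem exists_householder_sub_one_eq_vecMulVec (hu : u ≠ 0) :
    ∃ w ≠ 0, householder u - 1 = vecMulVec w (star u) := by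
  have hq : star u ⬝ᵥ u ≠ 0 := dotProduct_star_self_eq_zero.not.mpr hu
  refine ⟨-(2 / (star u ⬝ᵥ u)) • u, smul_ne_zero (by simpa using hq) hu, ?_⟩
  rw [householder, sub_sub_cancel_left, ← neg_smul, smul_vecMulVec]

theorem householder_isHermitian (u : n → 𝕜) : (householder u).IsHermitian := by
  have hq : star (2 / (star u ⬝ᵥ u)) = 2 / (star u ⬝ᵥ u) := by
    rw [star_div₀, ← star_dotProduct, star_ofNat]
  simp [IsHermitian, householder, conjTranspose_smul, hq]

theorem householder_mul_self (hu : u ≠ 0) : householder u * householder u = 1 := by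
  have hq : star u ⬝ᵥ u ≠ 0 := dotProduct_star_self_eq_zero.not.mpr hu
  simp only [householder, sub_mul, mul_sub, one_mul, mul_one, smul_mul_smul,
    vecMulVec_mul_vecMulVec]
  have hc : 2 / (star u ⬝ᵥ u) * (2 / (star u ⬝ᵥ u)) * (star u ⬝ᵥ u) =
      2 * (2 / (star u ⬝ᵥ u)) := by
    field_simp
  rw [vecMulVec_smul, smul_smul, hc, mul_smul, two_smul]
  abel

theorem householder_mem_unitaryGroup (hu : u ≠ 0) : householder u ∈ unitaryGroup n 𝕜 := by
  rw [mem_unitaryGroup_iff, star_eq_conjTranspose, (householder_isHermitian u).eq]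
  exact householder_mul_self hu

theorem householder_ne_one (hu : u ≠ 0) : householder u ≠ 1 := by
  obtain ⟨w, hw, h⟩ := exists_householder_sub_one_eq_vecMulVec hu
  rw [← sub_ne_zero, h]
  exact vecMulVec_ne_zero hw (star_ne_zero.mpr hu)

theorem finrank_ker_householder_sub_one (hu : u ≠ 0) :
    Module.finrank 𝕜 (LinearMap.ker (toLin' (householder u - 1))) = Fintype.card n - 1 := by
  obtain ⟨w, hw, h⟩ := exists_householder_sub_one_eq_vecMulVec hu
  rw [h]
  exact finrank_ker_toLin'_vecMulVec hw (star_ne_zero.mpr hu)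

end Householder

end Matrix

theorem r1_eq_householder : r1 = householder ![0, 1, -1] := by
  ext i j
  simp only [householder, Matrix.sub_apply, Matrix.smul_apply, vecMulVec_apply, Pi.star_apply,
    dotProduct, Fin.sum_univ_three]
  fin_cases i <;> fin_cases j <;> norm_num [r1, Matrix.cons_val_two]

theorem r2_eq_householder : r2 = householder ![0, 0, 1] := by
  ext i j
  simp only [householder, Matrix.sub_apply, Matrix.smul_apply, vecMulVec_apply, Pi.star_apply,
    dotProduct, Fin.sum_univ_three]
  fin_cases i <;> fin_cases j <;> norm_num [r2, Matrix.cons_val_two]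

theorem alphaBar_mul_alpha : alphaBar * alpha = 2 := by
  have h7 : ((Real.sqrt 7 : ℝ) : ℂ) ^ 2 = 7 := by
    rw [← Complex.ofReal_pow, Real.sq_sqrt (by norm_num)]; norm_num
  rw [alpha, alphaBar]
  linear_combination (-Complex.I ^ 2 / 4) * h7 - (7 / 4 : ℂ) * Complex.I_sq

theorem conj_alphaBar : starRingEnd ℂ alphaBar = alpha := by
  simp [alpha, alphaBar, Complex.conj_ofReal, map_ofNat]

theorem r3_eq_householder : r3 = householder ![1, 1, alphaBar] := by
  have hq : star ![1, 1, alphaBar] ⬝ᵥ ![1, 1, alphaBar] = 4 := by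
    rw [dotProduct, Fin.sum_univ_three]
    norm_num [Matrix.cons_val_two, conj_alphaBar, mul_comm alpha, alphaBar_mul_alpha]
  ext i j
  simp only [householder, hq, Matrix.sub_apply, Matrix.smul_apply, vecMulVec_apply, Pi.star_apply]
  fin_cases i <;> fin_cases j <;>
    norm_num [r3, Matrix.cons_val_two, conj_alphaBar, alphaBar_mul_alpha]

/-- Each `rᵢ` is a unitary involution whose fixed subspace is a hyperplane
(a complex reflection of order 2). -/
theorem stmt_2 :
    (∀ r ∈ ({r1, r2, r3} : Set (Matrix (Fin 3) (Fin 3) ℂ)),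
      r ∈ Matrix.unitaryGroup (Fin 3) ℂ ∧
      r * r = 1 ∧ r ≠ 1 ∧
      Module.finrank ℂ (LinearMap.ker (Matrix.toLin' (r - 1))) = 2) := by
  have isReflection (u : Fin 3 → ℂ) (hu : u ≠ 0) :
      householder u ∈ unitaryGroup (Fin 3) ℂ ∧ householder u * householder u = 1 ∧
        householder u ≠ 1 ∧ Module.finrank ℂ (LinearMap.ker (toLin' (householder u - 1))) = 2 :=
    ⟨householder_mem_unitaryGroup hu, householder_mul_self hu, householder_ne_one hu,
      finrank_ker_householder_sub_one hu⟩
  rintro r (rfl | rfl | rfl)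
  · rw [r1_eq_householder]
    exact isReflection _ fun h => by simpa using congrFun h 1
  · rw [r2_eq_householder]
    exact isReflection _ fun h => by simpa [Matrix.cons_val_two] using congrFun h 2
  · rw [r3_eq_householder]
    exact isReflection _ fun h => by simpa using congrFun h 0
end

section
/- The element g₇ = -r₁r₂r₃ = (1/2)·[[-1,1,α],[-ᾱ,-ᾱ,0],[1,-1,α]] (with α = (1+i√7)/2, ᾱ = (1-i√7)/2) has order 7 as a matrix in GL₃(ℂ), i.e., g₇⁷ = I and g₇ ≠ I. -/
open Matrix

noncomputable def g7 : Matrix (Fin 3) (Fin 3) ℂ :=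
  (1/2 : ℂ) • !![-1,1,alpha; -alphaBar,-alphaBar,0; 1,-1,alpha]

noncomputable def G (x : ℂ) : Matrix (Fin 3) (Fin 3) ℂ :=
  (1/2 : ℂ) • !![-1,1,(1+x)/2; -(1-x)/2,-(1-x)/2,0; 1,-1,(1+x)/2]
noncomputable def M2 (x : ℂ) : Matrix (Fin 3) (Fin 3) ℂ :=
  (1/4 : ℂ) • !![1+x,-2,-2; -1-x,-2,-2; 0,1-x,-1+x]
noncomputable def M4 (x : ℂ) : Matrix (Fin 3) (Fin 3) ℂ :=
  (1/4 : ℂ) • !![-1+x,0,1-x; 2,1+x,2; -2,1+x,-2]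

lemma hG2 (x : ℂ) (hx : x ^ 2 = -7) : G x * G x = M2 x := by
  ext i j
  fin_cases i <;> fin_cases j <;>
    simp [G, M2, Matrix.mul_apply, Fin.sum_univ_three, vecHead, vecTail] <;>
    ring_nf <;> simp only [hx] <;> ring_nf

lemma hG4 (x : ℂ) (hx : x ^ 2 = -7) : M2 x * M2 x = M4 x := by
  ext i j
  fin_cases i <;> fin_cases j <;>
    simp [M2, M4, Matrix.mul_apply, Fin.sum_univ_three, vecHead, vecTail] <;>
    ring_nf <;> simp only [hx] <;> ring_nf

set_option maxHeartbeats 1000000 in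
lemma hG7 (x : ℂ) (hx : x ^ 2 = -7) : M4 x * M2 x * G x = 1 := by
  have hx3 : x ^ 3 = -7 * x := by rw [pow_succ, hx]
  ext i j
  fin_cases i <;> fin_cases j <;>
    simp [G, M2, M4, Matrix.mul_apply, Fin.sum_univ_three, Matrix.one_apply, vecHead, vecTail] <;>
    ring_nf <;> simp only [hx3, hx] <;> ring_nf

lemma hx7 : (Complex.I * Real.sqrt 7) ^ 2 = -7 := by
  rw [mul_pow, Complex.I_sq, ← Complex.ofReal_pow, Real.sq_sqrt (by norm_num : (0:ℝ) ≤ 7)]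
  norm_num

lemma g7_eq_G : g7 = G (Complex.I * Real.sqrt 7) := by
  ext i j
  fin_cases i <;> fin_cases j <;>
    simp [g7, G, alpha, alphaBar] <;> ring

/-- `g₇ = -r₁r₂r₃` has order 7 in `GL₃(ℂ)`. -/
theorem stmt_4 :
    g7 = -(r1 * r2 * r3) ∧ g7 ^ 7 = 1 ∧ g7 ≠ 1 := by
  refine ⟨?_, ?_, ?_⟩
  · ext i j
    fin_cases i <;> fin_cases j <;>
      simp [g7, r1, r2, r3, alpha, alphaBar, Matrix.mul_apply, Fin.sum_univ_succ]
  · set x : ℂ := Complex.I * Real.sqrt 7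
    have h2 : g7 * g7 = M2 x := by rw [g7_eq_G]; exact hG2 x hx7
    have h4 : M2 x * M2 x = M4 x := hG4 x hx7
    calc g7 ^ 7 = ((g7 * g7) * (g7 * g7)) * (g7 * g7) * g7 := by noncomm_ring
    _ = M4 x * M2 x * G x := by rw [h2, h4, g7_eq_G]
    _ = 1 := hG7 x hx7
  · intro h
    have := congrFun (congrFun h 0) 0
    simp [g7, Matrix.one_apply] at this
    norm_num at this
end

section
/- The integer symmetric quadratic form on ℤ⁶ given by the matrix K = [[0,0,0,2,1,0],[0,1,-1,-1,1,0],[0,-1,2,1,1,2],[2,-1,1,1,2,1],[1,1,1,2,4,2],[0,0,2,1,2,2]] is ℤ-equivalent to the diagonal form diag(1,1,1,-1,-1,-7); that is, there exists U ∈ GL₆(ℤ) with Uᵀ K U = diag(1,1,1,-1,-1,-7). -/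
open Matrix

def Kmat : Matrix (Fin 6) (Fin 6) ℤ :=
  !![0,0,0,2,1,0;
     0,1,-1,-1,1,0;
     0,-1,2,1,1,2;
     2,-1,1,1,2,1;
     1,1,1,2,4,2;
     0,0,2,1,2,2]

def diagonalizer : Matrix (Fin 6) (Fin 6) ℤ :=
  !![0,-2,0,2,-1,0;
     2,0,1,0,-1,-6;
     0,-2,-1,1,-2,3;
     1,1,0,-1,0,-3;
     -1,-2,-1,1,-1,6;
     -1,2,2,0,3,-4]

def diagonalizerInv : Matrix (Fin 6) (Fin 6) ℤ :=
  !![1,0,-4,-4,-2,-3;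
     0,-1,-1,-7,-6,-3;
     -1,1,0,-2,0,0;
     1,-1,-2,-6,-5,-3;
     1,0,-2,2,2,0;
     0,0,-1,-2,-1,-1]

theorem diagonalizer_mul_diagonalizerInv : diagonalizer * diagonalizerInv = 1 := by
  decide

theorem transpose_diagonalizer_mul_Kmat_mul_diagonalizer :
    diagonalizerᵀ * Kmat * diagonalizer = diagonal ![1,1,1,-1,-1,-7] := by
  decide

/-- The integral quadratic form `K` is `ℤ`-equivalent to `diag(1,1,1,-1,-1,-7)`. -/
theorem stmt_11 :
    ∃ U : Matrix (Fin 6) (Fin 6) ℤ, IsUnit U.det ∧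
      Uᵀ * Kmat * U = Matrix.diagonal ![1,1,1,-1,-1,-7] :=
  ⟨diagonalizer, isUnit_det_of_right_inverse diagonalizer_mul_diagonalizerInv,
    transpose_diagonalizer_mul_Kmat_mul_diagonalizer⟩
end

section
/- Define h(k) = (1/336)·[k³ + 21k² + 140k + 294 + 42·(-1)^{k/2} + 48·(k/7)] for even k ≥ 0, where (k/7) is the Legendre symbol mod 7 (with value 0 when 7 | k). Then h(2p) equals the coefficient of t^p in the power series (1+t⁴)/((1-t)²(1-t²)(1-t⁷)) for all p ≥ 0. -/
open PowerSeries

/-! The denominator `(1 - t)²(1 - t²)(1 - t⁷) = (1 - t)⁴(1 + t)(1 + t + ⋯ + t⁶)` is a unit of `ℚ⟦t⟧`,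
so it suffices to check that `h(2p)` satisfies the order-11 linear recurrence it encodes, with the
right first eleven values. The recurrence holds termwise: `(1 - t)⁴` annihilates the cubic part,
`1 + t` the sign `(-1)^p`, and `1 - t⁷` the 7-periodic Legendre symbol. -/

noncomputable def hilbertFn (p : ℕ) : ℚ :=
  ((2 * p : ℚ) ^ 3 + 21 * (2 * p : ℚ) ^ 2 + 140 * (2 * p : ℚ) + 294 +
      42 * (-1 : ℚ) ^ p + 48 * (jacobiSym (2 * p : ℤ) 7 : ℚ)) / 336

lemma jacobiSym_two_mul_add_seven (a : ℤ) : jacobiSym (2 * (a + 7)) 7 = jacobiSym (2 * a) 7 :=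
  jacobiSym.mod_left' (by omega)

lemma hilbertFn_recurrence (m : ℕ) :
    hilbertFn (m + 11) - 2 * hilbertFn (m + 10) + 2 * hilbertFn (m + 8) - hilbertFn (m + 7)
      - hilbertFn (m + 4) + 2 * hilbertFn (m + 3) - 2 * hilbertFn (m + 1) + hilbertFn m = 0 := by
  simp only [hilbertFn]
  push_cast
  rw [show (m : ℤ) + 11 = m + 4 + 7 by ring, show (m : ℤ) + 10 = m + 3 + 7 by ring,
    show (m : ℤ) + 8 = m + 1 + 7 by ring]
  simp only [jacobiSym_two_mul_add_seven]
  ring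

lemma mk_hilbertFn_mul_denom :
    mk hilbertFn * ((1 - X) ^ 2 * (1 - X ^ 2) * (1 - X ^ 7)) = 1 + X ^ 4 := by
  rw [show ((1 - X) ^ 2 * (1 - X ^ 2) * (1 - X ^ 7) : ℚ⟦X⟧) =
      1 - C 2 * X + C 2 * X ^ 3 - X ^ 4 - X ^ 7 + C 2 * X ^ 8 - C 2 * X ^ 10 + X ^ 11 by
    simp only [map_ofNat]; ring]
  ext n
  simp only [mul_sub, mul_add, mul_one, mul_left_comm _ (C _), map_sub, map_add, coeff_C_mul,
    coeff_mul_X_pow', coeff_mk, coeff_one, coeff_X_pow]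
  rcases lt_or_ge n 11 with hn | hn
  · interval_cases n <;> norm_num [hilbertFn]
  · obtain ⟨m, rfl⟩ := Nat.exists_eq_add_of_le' hn
    simp (disch := omega) only [if_pos, if_neg, Nat.reduceSubDiff, Nat.add_sub_cancel,
      coeff_succ_mul_X, coeff_mk, add_zero]
    linear_combination hilbertFn_recurrence m

/-- The Hilbert function `h(2p) = (1/336)[(2p)³+21(2p)²+140(2p)+294+42·(-1)^p+48·(2p/7)]`
(Legendre symbol mod 7) equals the coefficient of `t^p` in
`(1+t⁴)/((1-t)²(1-t²)(1-t⁷))`. -/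
theorem stmt_13 (V : PowerSeries ℚ)
    (hV : V * ((1 - X) ^ 2 * (1 - X ^ 2) * (1 - X ^ 7)) = 1 + X ^ 4) :
    ∀ p : ℕ,
      ((2 * p : ℚ) ^ 3 + 21 * (2 * p : ℚ) ^ 2 + 140 * (2 * p : ℚ) + 294 +
          42 * (-1 : ℚ) ^ p + 48 * (jacobiSym (2 * p : ℤ) 7 : ℚ)) / 336 =
        coeff p V := by
  have hunit : IsUnit ((1 - X) ^ 2 * (1 - X ^ 2) * (1 - X ^ 7) : ℚ⟦X⟧) := by
    rw [isUnit_iff_constantCoeff]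
    simp
  have hV_eq : V = mk hilbertFn := hunit.mul_right_cancel (hV.trans mk_hilbertFn_mul_denom.symm)
  intro p
  rw [hV_eq, coeff_mk]
  rfl
end

section
/- The quartic polynomial a₅t⁴ + a₄t³ + a₃t² + 1 ∈ ℂ[t] cannot have a double root at t = 0; more precisely, any root γ of this polynomial is nonzero, and if γ is a double root then the octic F₈ = y₀y₄ - y₃² + y₂⁴ + a₃y₂²y₁⁴ + a₄y₂y₁⁶ + a₅y₁⁸ has a singular point with y₁ ≠ 0 in the affine chart y₁ = 1, i.e., the polynomial y₀y₄ - y₃² + y₂⁴ + a₃y₂² + a₄y₂ + a₅ ∈ ℂ[y₀,y₂,y₃,y₄] has a critical point on its zero locus. -/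
/-!
The quartic `p(t) = a₅t⁴ + a₄t³ + a₃t² + 1` is the reversal of `q(y) = y⁴ + a₃y² + a₄y + a₅`,
i.e. `p(t) = t⁴ q(1/t)`. Its constant term `1` rules out the root `0`, and `t ↦ 1/t` carries a
double root `γ` of `p` to a double root `1/γ` of `q`. Hence `(y₀, y₂, y₃, y₄) = (0, 1/γ, 0, 0)`
is a singular point: the partials in `y₀, y₃, y₄` vanish there for free.
-/

section ReversedQuartic

variable {K : Type*} [Field K] {a₃ a₄ a₅ γ : K}

theorem ne_zero_of_reversed_quartic_eq_zero (hp : a₅ * γ ^ 4 + a₄ * γ ^ 3 + a₃ * γ ^ 2 + 1 = 0) :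
    γ ≠ 0 := by
  rintro rfl
  simp at hp

theorem quartic_inv_eq_zero (hp : a₅ * γ ^ 4 + a₄ * γ ^ 3 + a₃ * γ ^ 2 + 1 = 0) :
    γ⁻¹ ^ 4 + a₃ * γ⁻¹ ^ 2 + a₄ * γ⁻¹ + a₅ = 0 := by
  have hγ := ne_zero_of_reversed_quartic_eq_zero hp
  field_simp
  linear_combination hp

/-- `q'(1/γ) = (4 p(γ) - γ p'(γ)) / γ³`. -/
theorem quartic_deriv_inv_eq_zero (hp : a₅ * γ ^ 4 + a₄ * γ ^ 3 + a₃ * γ ^ 2 + 1 = 0)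
    (hp' : 4 * a₅ * γ ^ 3 + 3 * a₄ * γ ^ 2 + 2 * a₃ * γ = 0) :
    4 * γ⁻¹ ^ 3 + 2 * a₃ * γ⁻¹ + a₄ = 0 := by
  have hγ := ne_zero_of_reversed_quartic_eq_zero hp
  field_simp
  linear_combination 4 * hp - γ * hp'

end ReversedQuartic

/-- Any root of `a₅t⁴ + a₄t³ + a₃t² + 1` is nonzero, and if it has a double
root `γ` then the octic `y₀y₄ - y₃² + y₂⁴ + a₃y₂²y₁⁴ + a₄y₂y₁⁶ + a₅y₁⁸`
has a singular point in the chart `y₁ = 1`: the polynomial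
`y₀y₄ - y₃² + y₂⁴ + a₃y₂² + a₄y₂ + a₅` has a critical point on its zero locus. -/
theorem stmt_15 (a₃ a₄ a₅ : ℂ) :
    (∀ γ : ℂ, a₅ * γ ^ 4 + a₄ * γ ^ 3 + a₃ * γ ^ 2 + 1 = 0 → γ ≠ 0) ∧
    (∀ γ : ℂ, a₅ * γ ^ 4 + a₄ * γ ^ 3 + a₃ * γ ^ 2 + 1 = 0 →
      4 * a₅ * γ ^ 3 + 3 * a₄ * γ ^ 2 + 2 * a₃ * γ = 0 →
      ∃ y₀ y₂ y₃ y₄ : ℂ,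
        y₀ * y₄ - y₃ ^ 2 + y₂ ^ 4 + a₃ * y₂ ^ 2 + a₄ * y₂ + a₅ = 0 ∧
        y₄ = 0 ∧
        4 * y₂ ^ 3 + 2 * a₃ * y₂ + a₄ = 0 ∧
        -(2 * y₃) = 0 ∧
        y₀ = 0) := by
  refine ⟨fun γ hp => ne_zero_of_reversed_quartic_eq_zero hp, fun γ hp hp' => ?_⟩
  refine ⟨0, γ⁻¹, 0, 0, ?_, rfl, quartic_deriv_inv_eq_zero hp hp', by ring, rfl⟩
  simpa using quartic_inv_eq_zero hp
end

section
/- The generating function Σ_{k≥0} h(k) t^k, where h(k) = k³/48 + 3k²/16 + 2k/3 + 1 + d₀(k)k + d₁(k) with d₀, d₁ the 4-periodic functions d₀ = 0, -3/16, 0, -3/16 and d₁ = 0, -11/16, -1/4, -11/16 for k ≡ 0,1,2,3 mod 4 respectively, equals the rational function (1 - t + t²)/((1-t)²(1-t²)(1-t⁴)). -/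
open PowerSeries

def d0 (k : ℕ) : ℚ := if k % 4 = 0 ∨ k % 4 = 2 then 0 else -3/16
def d1 (k : ℕ) : ℚ := if k % 4 = 0 then 0 else if k % 4 = 2 then -1/4 else -11/16

def hfun (k : ℕ) : ℚ :=
  (k : ℚ) ^ 3 / 48 + 3 * (k : ℚ) ^ 2 / 16 + 2 * (k : ℚ) / 3 + 1 + d0 k * k + d1 k

/-!
The denominator is `(1 - t)⁴ (1 + t)² (1 + t²) = 1 - 2t + 2t³ - 2t⁴ + 2t⁵ - 2t⁷ + t⁸`, so the
corresponding recurrence annihilates every sequence `p(k) + (-1)ᵏ (a + b k) + c iᵏ + c' (-i)ᵏ`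
with `deg p ≤ 3`, which is exactly the shape of `h`. Hence the coefficients of
`(Σ h(k) tᵏ) · (1 - t)²(1 - t²)(1 - t⁴)` vanish from degree 8 on, and the first eight are
computed directly.
-/

section

variable {R : Type*} [CommRing R]

theorem mul_denominator_eq (f : R⟦X⟧) :
    f * ((1 - X) ^ 2 * (1 - X ^ 2) * (1 - X ^ 4)) =
      f - 2 • (f * X ^ 1) + 2 • (f * X ^ 3) - 2 • (f * X ^ 4) + 2 • (f * X ^ 5)
        - 2 • (f * X ^ 7) + f * X ^ 8 := by
  simp only [nsmul_eq_mul]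
  ring

theorem coeff_mk_mul_denominator (a : ℕ → R) (n : ℕ) :
    coeff n (mk a * ((1 - X) ^ 2 * (1 - X ^ 2) * (1 - X ^ 4))) =
      a n - 2 * (if 1 ≤ n then a (n - 1) else 0) + 2 * (if 3 ≤ n then a (n - 3) else 0)
        - 2 * (if 4 ≤ n then a (n - 4) else 0) + 2 * (if 5 ≤ n then a (n - 5) else 0)
        - 2 * (if 7 ≤ n then a (n - 7) else 0) + (if 8 ≤ n then a (n - 8) else 0) := by
  rw [mul_denominator_eq]
  simp only [map_add, map_sub, map_nsmul, coeff_mul_X_pow', coeff_mk]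
  simp only [nsmul_eq_mul, Nat.cast_ofNat]

end

theorem hfun_recurrence (m : ℕ) :
    hfun (m + 8) - 2 * hfun (m + 7) + 2 * hfun (m + 5) - 2 * hfun (m + 4)
      + 2 * hfun (m + 3) - 2 * hfun (m + 1) + hfun m = 0 := by
  obtain ⟨q, r, hr, rfl⟩ : ∃ q r, r < 4 ∧ m = 4 * q + r :=
    ⟨m / 4, m % 4, by omega, by omega⟩
  have hmod : ∀ c : ℕ, (4 * q + r + c) % 4 = (r + c) % 4 := fun c => by omega
  have hmod₀ : (4 * q + r) % 4 = r % 4 := by omega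
  interval_cases r <;>
  · simp only [hfun, d0, d1, hmod, hmod₀]
    norm_num
    ring

/-- `Σ_{k≥0} h(k) t^k = (1 - t + t²)/((1-t)²(1-t²)(1-t⁴))`. -/
theorem stmt_18 :
    PowerSeries.mk hfun * ((1 - X) ^ 2 * (1 - X ^ 2) * (1 - X ^ 4)) =
      1 - X + X ^ 2 := by
  ext n
  rw [coeff_mk_mul_denominator]
  rcases lt_or_ge n 8 with hn | hn
  · interval_cases n <;> norm_num [hfun, d0, d1, coeff_X, coeff_one, coeff_X_pow]
  · obtain ⟨m, rfl⟩ := Nat.exists_eq_add_of_le' hn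
    simpa [coeff_X, coeff_one, coeff_X_pow] using hfun_recurrence m
end
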